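/- For every even integer b ≥ 2, ∑_{m=0}^{b} m·f(m,b) = ∑_{i=1}^{b/2} (4i − 1)·C(b, b/2 − i), where C(n,k) denotes the binomial coefficient. -/

import Mathlib

/-- The value of a ±1 step: `true` is a rightward step (+1), `false` a leftward step (−1). -/
def stepVal (x : Bool) : ℤ := if x then 1 else -1

/-- The position after `k` steps (partial sum `S_k`) of the walk with steps `ε`. -/
def partialSum {b : ℕ} (ε : Fin b → Bool) (k : ℕ) : ℤ :=
  ∑ i : Fin b, if (i : ℕ) < k then stepVal (ε i) else 0

/-- The maximum attained position `max { S_k : 0 ≤ k ≤ b }` of the walk with steps `ε`,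
started at 0. -/
def walkMax {b : ℕ} (ε : Fin b → Bool) : ℤ :=
  (Finset.range (b + 1)).sup' Finset.nonempty_range_add_one (partialSum ε)

/-- `f m b` : the number of ±1-step walks of length `b` starting at 0 whose maximum
attained position equals `m`. -/
def f (m : ℤ) (b : ℕ) : ℕ :=
  (Finset.univ.filter (fun ε : Fin b → Bool => walkMax ε = m)).card

/-!
Summing `f(m, b)` against `m` gives `∑_ε max ε`, and by the layer-cake formula this is
`∑_{m ≥ 1} #{max ≥ m}`. Reflecting a walk after its first visit to `m` shows
`#{max ≥ m} = #{S_b ≥ m} + #{S_b > m}`, so the whole sum only depends on the endpoint: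
`∑_ε (S_b⁺ + (S_b - 1)⁺)`. The endpoint of a walk with `t` up-steps is `2t - b`, and for
`b = 2h` the walks with `t = h + i` (`i ≥ 1`) contribute
`(4i - 1)·C(b, h + i) = (4i - 1)·C(b, h - i)`.
-/

open Finset

section Walks

variable {b : ℕ}

lemma stepVal_le_one (x : Bool) : stepVal x ≤ 1 := by cases x <;> simp [stepVal]

lemma stepVal_not (x : Bool) : stepVal (!x) = -stepVal x := by cases x <;> simp [stepVal]

lemma partialSum_zero (ε : Fin b → Bool) : partialSum ε 0 = 0 := by simp [partialSum]

lemma partialSum_succ (ε : Fin b → Bool) {k : ℕ} (hk : k < b) :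
    partialSum ε (k + 1) = partialSum ε k + stepVal (ε ⟨k, hk⟩) := by
  have hsplit : ∀ i : Fin b, (if (i : ℕ) < k + 1 then stepVal (ε i) else 0)
      = (if (i : ℕ) < k then stepVal (ε i) else 0)
        + (if i = ⟨k, hk⟩ then stepVal (ε i) else 0) := by
    intro i
    have : i = ⟨k, hk⟩ ↔ (i : ℕ) = k := Fin.ext_iff
    split_ifs <;> omega
  simp only [partialSum, hsplit, sum_add_distrib, sum_ite_eq', mem_univ, if_true]

lemma partialSum_le (ε : Fin b → Bool) (k : ℕ) : partialSum ε k ≤ b :=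
  calc partialSum ε k ≤ ∑ _i : Fin b, (1 : ℤ) :=
        sum_le_sum fun i _ => by split_ifs <;> simp [stepVal_le_one]
    _ = b := by simp

lemma partialSum_eq_two_mul_card_sub (ε : Fin b → Bool) :
    partialSum ε b = 2 * (#{i | ε i} : ℤ) - b := by
  have hstep : ∀ i : Fin b, stepVal (ε i) = 2 * (if ε i then 1 else 0) - 1 := by
    intro i; cases ε i <;> simp [stepVal]
  simp only [partialSum, Fin.is_lt, if_true, hstep, sum_sub_distrib, ← mul_sum,
    natCast_card_filter]
  simp

lemma exists_partialSum_eq (ε : Fin b → Bool) {m : ℤ} (hm : 0 ≤ m) :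
    ∀ {k : ℕ}, k ≤ b → m ≤ partialSum ε k → ∃ j ≤ k, partialSum ε j = m
  | 0, _, h => ⟨0, le_rfl, by rw [partialSum_zero] at h ⊢; omega⟩
  | k + 1, hk, h => by
    by_cases hmk : m ≤ partialSum ε k
    · obtain ⟨j, hj, hjm⟩ := exists_partialSum_eq ε hm (by omega) hmk
      exact ⟨j, by omega, hjm⟩
    · have := partialSum_succ ε hk
      have := stepVal_le_one (ε ⟨k, hk⟩)
      exact ⟨k + 1, le_rfl, by omega⟩

lemma partialSum_le_walkMax (ε : Fin b → Bool) {k : ℕ} (hk : k ≤ b) :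
    partialSum ε k ≤ walkMax ε :=
  le_sup' (partialSum ε) (mem_range.2 (by omega))

lemma walkMax_nonneg (ε : Fin b → Bool) : 0 ≤ walkMax ε :=
  partialSum_zero ε ▸ partialSum_le_walkMax ε (Nat.zero_le b)

lemma walkMax_le (ε : Fin b → Bool) : walkMax ε ≤ b :=
  sup'_le _ _ fun k _ => partialSum_le ε k

lemma le_walkMax_iff {m : ℤ} (hm : 0 ≤ m) (ε : Fin b → Bool) :
    m ≤ walkMax ε ↔ ∃ k ≤ b, partialSum ε k = m := by
  constructor
  · intro h
    obtain ⟨k, hk, hmk⟩ := (le_sup'_iff _).1 h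
    have hkb : k ≤ b := Nat.lt_succ_iff.1 (mem_range.1 hk)
    obtain ⟨j, hj, hjm⟩ := exists_partialSum_eq ε hm hkb hmk
    exact ⟨j, by omega, hjm⟩
  · rintro ⟨k, hk, rfl⟩
    exact partialSum_le_walkMax ε hk

end Walks

section Reflection

variable {b : ℕ}

def reflectFrom (τ : ℕ) (ε : Fin b → Bool) : Fin b → Bool :=
  fun i => if (i : ℕ) < τ then ε i else !ε i

lemma reflectFrom_reflectFrom (τ : ℕ) (ε : Fin b → Bool) :
    reflectFrom τ (reflectFrom τ ε) = ε := by
  funext i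
  by_cases hi : (i : ℕ) < τ <;> simp [reflectFrom, hi]

lemma partialSum_reflectFrom_of_le (ε : Fin b → Bool) {τ k : ℕ} (hk : k ≤ τ) :
    partialSum (reflectFrom τ ε) k = partialSum ε k := by
  refine sum_congr rfl fun i _ => ?_
  by_cases hik : (i : ℕ) < k
  · simp [hik, reflectFrom, show (i : ℕ) < τ by omega]
  · simp [hik]

lemma partialSum_reflectFrom_of_ge (ε : Fin b → Bool) {τ k : ℕ} (hk : τ ≤ k) :
    partialSum (reflectFrom τ ε) k = 2 * partialSum ε τ - partialSum ε k := by
  have hterm : ∀ i : Fin b, (if (i : ℕ) < k then stepVal (reflectFrom τ ε i) else 0)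
      = 2 * (if (i : ℕ) < τ then stepVal (ε i) else 0)
        - (if (i : ℕ) < k then stepVal (ε i) else 0) := by
    intro i
    by_cases h1 : (i : ℕ) < τ
    · simp [h1, reflectFrom, show (i : ℕ) < k by omega]; ring
    · by_cases h2 : (i : ℕ) < k <;> simp [h1, h2, reflectFrom, stepVal_not]
  simp only [partialSum, hterm, sum_sub_distrib, ← mul_sum]

open Classical in
/-- Junk value `0` when the walk never visits `m`. -/
noncomputable def hitTime (m : ℤ) (ε : Fin b → Bool) : ℕ :=
  if h : ∃ k, partialSum ε k = m then Nat.find h else 0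

lemma partialSum_hitTime {m : ℤ} {ε : Fin b → Bool} (h : ∃ k, partialSum ε k = m) :
    partialSum ε (hitTime m ε) = m := by
  rw [hitTime, dif_pos h]
  exact Nat.find_spec h

lemma hitTime_le {m : ℤ} {ε : Fin b → Bool} {k : ℕ} (h : partialSum ε k = m) :
    hitTime m ε ≤ k := by
  rw [hitTime, dif_pos ⟨k, h⟩]
  exact Nat.find_le h

lemma partialSum_ne_of_lt_hitTime {m : ℤ} {ε : Fin b → Bool} {j : ℕ} (hj : j < hitTime m ε) :
    partialSum ε j ≠ m := by
  intro hjm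
  exact absurd (hitTime_le hjm) (not_le.2 hj)

noncomputable def reflectAtHit (m : ℤ) (ε : Fin b → Bool) : Fin b → Bool :=
  reflectFrom (hitTime m ε) ε

lemma hitTime_reflectAtHit {m : ℤ} {ε : Fin b → Bool} (h : ∃ k, partialSum ε k = m) :
    hitTime m (reflectAtHit m ε) = hitTime m ε := by
  unfold reflectAtHit
  have hit : partialSum (reflectFrom (hitTime m ε) ε) (hitTime m ε) = m :=
    (partialSum_reflectFrom_of_le ε le_rfl).trans (partialSum_hitTime h)
  refine le_antisymm (hitTime_le hit) (not_lt.1 fun hlt => ?_)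
  have := partialSum_hitTime ⟨_, hit⟩
  rw [partialSum_reflectFrom_of_le ε hlt.le] at this
  exact partialSum_ne_of_lt_hitTime hlt this

lemma reflectAtHit_reflectAtHit {m : ℤ} {ε : Fin b → Bool} (h : ∃ k, partialSum ε k = m) :
    reflectAtHit m (reflectAtHit m ε) = ε := by
  rw [reflectAtHit, hitTime_reflectAtHit h, reflectAtHit, reflectFrom_reflectFrom]

lemma hitTime_le_of_le_walkMax {m : ℤ} (hm : 0 ≤ m) {ε : Fin b → Bool} (h : m ≤ walkMax ε) :
    hitTime m ε ≤ b ∧ partialSum ε (hitTime m ε) = m :=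
  let ⟨k, hk, hkm⟩ := (le_walkMax_iff hm ε).1 h
  ⟨(hitTime_le hkm).trans hk, partialSum_hitTime ⟨k, hkm⟩⟩

lemma le_walkMax_reflectAtHit {m : ℤ} (hm : 0 ≤ m) {ε : Fin b → Bool} (h : m ≤ walkMax ε) :
    m ≤ walkMax (reflectAtHit m ε) := by
  obtain ⟨hτ, hτm⟩ := hitTime_le_of_le_walkMax hm h
  refine (le_walkMax_iff hm _).2 ⟨hitTime m ε, hτ, ?_⟩
  rw [reflectAtHit, partialSum_reflectFrom_of_le ε le_rfl, hτm]

lemma partialSum_reflectAtHit_of_le_walkMax {m : ℤ} (hm : 0 ≤ m) {ε : Fin b → Bool}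
    (h : m ≤ walkMax ε) : partialSum (reflectAtHit m ε) b = 2 * m - partialSum ε b := by
  obtain ⟨hτ, hτm⟩ := hitTime_le_of_le_walkMax hm h
  rw [reflectAtHit, partialSum_reflectFrom_of_ge ε hτ, hτm]

lemma card_le_walkMax_lt_partialSum {m : ℤ} (hm : 0 ≤ m) :
    #{ε : Fin b → Bool | m ≤ walkMax ε ∧ partialSum ε b < m}
      = #{ε : Fin b → Bool | m < partialSum ε b} := by
  have hmax : ∀ {ε : Fin b → Bool}, m < partialSum ε b → m ≤ walkMax ε := fun h =>
    h.le.trans (partialSum_le_walkMax _ le_rfl)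
  have hhit : ∀ {ε : Fin b → Bool}, m ≤ walkMax ε → ∃ k, partialSum ε k = m := fun h =>
    ⟨_, (hitTime_le_of_le_walkMax hm h).2⟩
  refine card_nbij' (reflectAtHit m) (reflectAtHit m) ?_ ?_ ?_ ?_
  · intro ε hε
    simp only [mem_coe, mem_filter, mem_univ, true_and] at hε ⊢
    have := partialSum_reflectAtHit_of_le_walkMax hm hε.1
    omega
  · intro ε hε
    simp only [mem_coe, mem_filter, mem_univ, true_and] at hε ⊢
    have := partialSum_reflectAtHit_of_le_walkMax hm (hmax hε)
    exact ⟨le_walkMax_reflectAtHit hm (hmax hε), by omega⟩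
  · intro ε hε
    simp only [mem_coe, mem_filter, mem_univ, true_and] at hε
    exact reflectAtHit_reflectAtHit (hhit hε.1)
  · intro ε hε
    simp only [mem_coe, mem_filter, mem_univ, true_and] at hε
    exact reflectAtHit_reflectAtHit (hhit (hmax hε))

lemma card_le_walkMax {m : ℤ} (hm : 0 ≤ m) :
    #{ε : Fin b → Bool | m ≤ walkMax ε}
      = #{ε : Fin b → Bool | m ≤ partialSum ε b} + #{ε : Fin b → Bool | m < partialSum ε b} := by
  rw [← card_le_walkMax_lt_partialSum hm,
    ← card_filter_add_card_filter_not (fun ε : Fin b → Bool => m ≤ partialSum ε b),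
    filter_filter, filter_filter]
  congr 2
  · ext ε
    simp only [mem_filter, mem_univ, true_and, and_iff_right_iff_imp]
    exact fun h => h.trans (partialSum_le_walkMax ε le_rfl)
  · ext ε
    simp [not_le]

end Reflection

section Counting

lemma sum_Icc_ite_le_eq_max {n : ℕ} {x : ℤ} (hx : x ≤ n) :
    ∑ m ∈ Icc 1 n, (if (m : ℤ) ≤ x then (1 : ℤ) else 0) = max x 0 := by
  rw [sum_boole]
  have : (Icc 1 n).filter (fun m : ℕ => (m : ℤ) ≤ x) = Icc 1 x.toNat := by
    ext m
    simp only [mem_filter, mem_Icc]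
    omega
  rw [this, Nat.card_Icc]
  omega

lemma sum_mul_f_eq_sum_walkMax (b : ℕ) :
    ∑ m ∈ range (b + 1), (m : ℤ) * (f m b : ℤ) = ∑ ε : Fin b → Bool, walkMax ε := by
  simp only [f, natCast_card_filter, mul_sum, mul_ite, mul_one, mul_zero]
  rw [sum_comm]
  refine sum_congr rfl fun ε _ => ?_
  obtain ⟨n, hn⟩ := Int.eq_ofNat_of_zero_le (walkMax_nonneg ε)
  have hnb : n < b + 1 := by have := walkMax_le ε; omega
  simp [hn, hnb]

lemma sum_walkMax_eq_sum_partialSum (b : ℕ) :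
    ∑ ε : Fin b → Bool, walkMax ε
      = ∑ ε : Fin b → Bool, (max (partialSum ε b) 0 + max (partialSum ε b - 1) 0) := by
  calc ∑ ε : Fin b → Bool, walkMax ε
      = ∑ ε : Fin b → Bool, ∑ m ∈ Icc 1 b, (if (m : ℤ) ≤ walkMax ε then (1 : ℤ) else 0) :=
        sum_congr rfl fun ε _ => by
          rw [sum_Icc_ite_le_eq_max (walkMax_le ε), max_eq_left (walkMax_nonneg ε)]
    _ = ∑ m ∈ Icc 1 b, (#{ε : Fin b → Bool | (m : ℤ) ≤ walkMax ε} : ℤ) := by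
        rw [sum_comm]
        simp only [natCast_card_filter]
    _ = ∑ m ∈ Icc 1 b, ((#{ε : Fin b → Bool | (m : ℤ) ≤ partialSum ε b} : ℤ)
          + #{ε : Fin b → Bool | (m : ℤ) < partialSum ε b}) :=
        sum_congr rfl fun m _ => by rw [card_le_walkMax (Nat.cast_nonneg m)]; push_cast; rfl
    _ = ∑ ε : Fin b → Bool, ∑ m ∈ Icc 1 b, ((if (m : ℤ) ≤ partialSum ε b then (1 : ℤ) else 0)
          + (if (m : ℤ) ≤ partialSum ε b - 1 then (1 : ℤ) else 0)) := by
        simp only [natCast_card_filter, Int.le_sub_one_iff, ← sum_add_distrib]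
        rw [sum_comm]
    _ = _ := sum_congr rfl fun ε _ => by
        rw [sum_add_distrib, sum_Icc_ite_le_eq_max (partialSum_le ε b),
          sum_Icc_ite_le_eq_max (by linarith [partialSum_le ε b])]

lemma sum_comp_partialSum_eq_sum_choose {M : Type*} [AddCommMonoid M] (b : ℕ) (φ : ℤ → M) :
    ∑ ε : Fin b → Bool, φ (partialSum ε b)
      = ∑ t ∈ range (b + 1), b.choose t • φ (2 * t - b) := by
  let e : (Fin b → Bool) ≃ Finset (Fin b) :=
    { toFun ε := {i | ε i}
      invFun s i := i ∈ s
      left_inv ε := by ext; simp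
      right_inv s := by ext; simp }
  calc ∑ ε : Fin b → Bool, φ (partialSum ε b)
      = ∑ s ∈ (univ : Finset (Fin b)).powerset, φ (2 * #s - b) := by
        rw [powerset_univ]
        exact Fintype.sum_equiv e _ _ fun ε => by rw [partialSum_eq_two_mul_card_sub]; rfl
    _ = _ := by
        rw [sum_powerset_apply_card (fun t : ℕ => φ (2 * t - b)), card_univ, Fintype.card_fin]

lemma sum_choose_smul_endpoint_eq (h : ℕ) :
    ∑ t ∈ range (h + h + 1),
        (h + h).choose t • (max (2 * (t : ℤ) - (h + h : ℕ)) 0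
          + max (2 * (t : ℤ) - (h + h : ℕ) - 1) 0)
      = ∑ i ∈ Icc 1 h, (4 * (i : ℤ) - 1) * ((h + h).choose (h - i) : ℤ) := by
  rw [show h + h + 1 = (h + 1) + h by ring, sum_range_add, ← Ico_add_one_right_eq_Icc,
    sum_Ico_eq_sum_range, Nat.add_sub_cancel]
  have hlow : ∀ t ∈ range (h + 1),
      (h + h).choose t • (max (2 * (t : ℤ) - (h + h : ℕ)) 0
        + max (2 * (t : ℤ) - (h + h : ℕ) - 1) 0) = 0 := fun t ht => by
    have := mem_range.1 ht
    rw [max_eq_right (by push_cast; omega), max_eq_right (by push_cast; omega)]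
    simp
  rw [sum_eq_zero hlow, zero_add]
  refine sum_congr rfl fun k hk => ?_
  have := mem_range.1 hk
  rw [Nat.choose_symm_of_eq_add (show h + h = (h - (1 + k)) + (h + 1 + k) by omega), nsmul_eq_mul,
    max_eq_left (by push_cast; omega), max_eq_left (by push_cast; omega)]
  push_cast
  ring

end Counting

theorem sum_m_f_eq_binom_sum_general (b : ℕ) (hbe : Even b) :
    ∑ m ∈ Finset.range (b + 1), (m : ℤ) * (f m b : ℤ)
      = ∑ i ∈ Finset.Icc 1 (b / 2), (4 * (i : ℤ) - 1) * (Nat.choose b (b / 2 - i) : ℤ) := by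
  obtain ⟨h, rfl⟩ := hbe
  calc ∑ m ∈ range (h + h + 1), (m : ℤ) * (f m (h + h) : ℤ)
      = ∑ ε : Fin (h + h) → Bool, walkMax ε := sum_mul_f_eq_sum_walkMax _
    _ = ∑ ε : Fin (h + h) → Bool,
          (max (partialSum ε (h + h)) 0 + max (partialSum ε (h + h) - 1) 0) :=
        sum_walkMax_eq_sum_partialSum _
    _ = _ := sum_comp_partialSum_eq_sum_choose _ (fun s => max s 0 + max (s - 1) 0)
    _ = _ := by
        rw [show (h + h) / 2 = h by omega]
        exact sum_choose_smul_endpoint_eq h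

/-- For even `b ≥ 2`, `∑_{m=0}^{b} m·f(m,b) = ∑_{i=1}^{b/2} (4i − 1)·C(b, b/2 − i)`. -/
theorem sum_m_f_eq_binom_sum (b : ℕ) (hb : 2 ≤ b) (hbe : Even b) :
    ∑ m ∈ Finset.range (b + 1), (m : ℤ) * (f m b : ℤ)
      = ∑ i ∈ Finset.Icc 1 (b / 2), (4 * (i : ℤ) - 1) * (Nat.choose b (b / 2 - i) : ℤ) :=
  sum_m_f_eq_binom_sum_general b hbe
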